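/- arXiv:cs/0011037 — 3 statements merged into one kernel-verified Lean document; each statement's English description precedes it below -/
import Mathlib

section
/- Normal form characterization: Every normal, almost closed typable term of type L(τ) is a list; every normal, almost closed typable term of type B is tt or ff; every normal, almost closed typable term of type ◇ is a variable of type ◇. -/
namespace AS

inductive Ty : Type
  | dia | bool
  | arrow (τ ρ : Ty)
  | tensor (τ ρ : Ty)
  | prod (τ ρ : Ty)
  | list (τ : Ty)
  deriving DecidableEq

structure Var : Type where
  name : ℕ
  ty : Ty
  deriving DecidableEq

inductive Const : Type
  | tt | ff
  | nil (τ : Ty)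
  | cons (τ : Ty)
  | tens (τ ρ : Ty)
  deriving DecidableEq

def Const.type : Const → Ty
  | .tt => .bool
  | .ff => .bool
  | .nil τ => .list τ
  | .cons τ => .arrow .dia (.arrow τ (.arrow (.list τ) (.list τ)))
  | .tens τ ρ => .arrow τ (.arrow ρ (.tensor τ ρ))

inductive Tm : Type
  | var (x : Var)
  | const (c : Const)
  | lam (x : Var) (t : Tm)
  | pair (t s : Tm)
  | app (t s : Tm)
  | brace (t : Tm)
  deriving DecidableEq

/-- Free variables of a term. -/
def FV : Tm → Finset Var
  | .var x => {x}
  | .const _ => ∅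
  | .lam x t => FV t \ {x}
  | .pair t s => FV t ∪ FV s
  | .app t s => FV t ∪ FV s
  | .brace t => FV t

/-- Substitution `t[s/x]` (terms are identified up to α-equivalence). -/
def subst : Tm → Var → Tm → Tm
  | .var y, x, s => if y = x then s else .var y
  | .const c, _, _ => .const c
  | .lam y t, x, s => if y = x then .lam y t else .lam y (subst t x s)
  | .pair t r, x, s => .pair (subst t x s) (subst r x s)
  | .app t r, x, s => .app (subst t x s) (subst r x s)
  | .brace t, x, s => .brace (subst t x s)

/-- The typing relation `Γ ⊢ t : τ` of the affine linear system. -/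
inductive Typed : Finset Var → Tm → Ty → Prop
  | var {Γ : Finset Var} {x : Var} (h : x ∈ Γ) : Typed Γ (.var x) x.ty
  | const {Γ : Finset Var} (c : Const) : Typed Γ (.const c) c.type
  | lamI {Γ : Finset Var} {x : Var} {t : Tm} {ρ : Ty}
      (h : Typed (insert x Γ) t ρ) : Typed Γ (.lam x t) (.arrow x.ty ρ)
  | arrE {Γ₁ Γ₂ : Finset Var} {t s : Tm} {τ ρ : Ty}
      (hd : Disjoint Γ₁ Γ₂) (ht : Typed Γ₁ t (.arrow τ ρ)) (hs : Typed Γ₂ s τ) :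
      Typed (Γ₁ ∪ Γ₂) (.app t s) ρ
  | pairI {Γ : Finset Var} {t s : Tm} {τ ρ : Ty}
      (ht : Typed Γ t τ) (hs : Typed Γ s ρ) : Typed Γ (.pair t s) (.prod τ ρ)
  | prodE1 {Γ : Finset Var} {t : Tm} {τ ρ : Ty} (h : Typed Γ t (.prod τ ρ)) :
      Typed Γ (.app t (.const .tt)) τ
  | prodE0 {Γ : Finset Var} {t : Tm} {τ ρ : Ty} (h : Typed Γ t (.prod τ ρ)) :
      Typed Γ (.app t (.const .ff)) ρ
  | boolE {Γ₁ Γ₂ : Finset Var} {t s r : Tm} {τ : Ty}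
      (hd : Disjoint Γ₁ Γ₂) (ht : Typed Γ₁ t .bool)
      (hs : Typed Γ₂ s τ) (hr : Typed Γ₂ r τ) :
      Typed (Γ₁ ∪ Γ₂) (.app t (.pair s r)) τ
  | tensE {Γ₁ Γ₂ : Finset Var} {t s : Tm} {x y : Var} {σ : Ty}
      (hd : Disjoint Γ₁ Γ₂)
      (ht : Typed Γ₁ t (.tensor x.ty y.ty))
      (hs : Typed (insert x (insert y Γ₂)) s σ) :
      Typed (Γ₁ ∪ Γ₂) (.app t (.lam x (.lam y s))) σ
  | listE {Γ : Finset Var} {t s : Tm} {τ ρ : Ty}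
      (ht : Typed Γ t (.list τ))
      (hs : Typed ∅ s (.arrow .dia (.arrow τ (.arrow ρ ρ)))) :
      Typed Γ (.app t (.brace s)) (.arrow ρ ρ)

/-- `IsList t n`: `t` is a list with `n` entries,
    `cons d₁ a₁ (… (cons dₙ aₙ nil)…)` with each `dᵢ` of type `◇`. -/
inductive IsList : Tm → ℕ → Prop
  | nil {τ : Ty} : IsList (.const (.nil τ)) 0
  | cons {τ : Ty} {d a ℓ : Tm} {n : ℕ}
      (hd : ∃ Γ, Typed Γ d .dia) (hℓ : IsList ℓ n) :
      IsList (.app (.app (.app (.const (.cons τ)) d) a) ℓ) (n + 1)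

/-- The conversion rules `↦`. -/
inductive Conv : Tm → Tm → Prop
  | beta {x : Var} {t s : Tm} : Conv (.app (.lam x t) s) (subst t x s)
  | projT {t s : Tm} : Conv (.app (.pair t s) (.const .tt)) t
  | projF {t s : Tm} : Conv (.app (.pair t s) (.const .ff)) s
  | iteT {t s : Tm} : Conv (.app (.const .tt) (.pair t s)) t
  | iteF {t s : Tm} : Conv (.app (.const .ff) (.pair t s)) s
  | tens {τ ρ : Ty} {t s r : Tm} {x y : Var} :
      Conv (.app (.app (.app (.const (.tens τ ρ)) t) s) (.lam x (.lam y r)))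
           (subst (subst r x t) y s)
  | nilIt {τ : Ty} {t s : Tm} :
      Conv (.app (.app (.const (.nil τ)) (.brace t)) s) s
  | consIt {τ : Ty} {d a ℓ t s : Tm} {n : ℕ} (h : IsList ℓ n) :
      Conv (.app (.app (.app (.app (.app (.const (.cons τ)) d) a) ℓ) (.brace t)) s)
           (.app (.app (.app t d) a) (.app (.app ℓ (.brace t)) s))

/-- The reduction relation: closure of `↦` under left and right application
    contexts (no reduction under abstractions, pairs, or inside braces). -/
inductive Red : Tm → Tm → Prop
  | conv {t t' : Tm} (h : Conv t t') : Red t t'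
  | appL {t t' s : Tm} (h : Red t t') : Red (.app t s) (.app t' s)
  | appR {t s s' : Tm} (h : Red s s') : Red (.app t s) (.app t s')

def Normal (t : Tm) : Prop := ¬ ∃ t', Red t t'

/-- All free variables have type `◇`. -/
def AlmostClosed (t : Tm) : Prop := ∀ x ∈ FV t, x.ty = Ty.dia

/-- The length of a term. -/
def len : Tm → ℕ
  | .var _ => 1
  | .const _ => 1
  | .lam _ t => len t + 1
  | .pair t s => max (len t) (len s) + 1
  | .app t s => len t + len s
  | .brace _ => 0

open Classical in
/-- The polynomial bound `P(t) : ℕ → ℕ`. -/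
noncomputable def P : Tm → ℕ → ℕ
  | .var _, _ => 0
  | .const _, _ => 0
  | .lam _ t, m => P t m
  | .pair t s, m => max (P t m) (P s m)
  | .brace h, m => m * P h m + m * len h
  | .app t (.brace h), m =>
      if hl : ∃ n, IsList t n then
        P t m + min hl.choose m * P h m + min hl.choose m * len h
      else P t m + (m * P h m + m * len h)
  | .app t s, m => P t m + P s m

end AS

namespace AS

lemma normal_appL {t s : Tm} (h : Normal (.app t s)) : Normal t := by
  rintro ⟨t', ht'⟩; exact h ⟨_, Red.appL ht'⟩

lemma normal_appR {t s : Tm} (h : Normal (.app t s)) : Normal s := by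
  rintro ⟨s', hs'⟩; exact h ⟨_, Red.appR hs'⟩

lemma ac_appL {t s : Tm} (h : AlmostClosed (.app t s)) : AlmostClosed t := by
  intro x hx; exact h x (by simp [FV, hx])

lemma ac_appR {t s : Tm} (h : AlmostClosed (.app t s)) : AlmostClosed s := by
  intro x hx; exact h x (by simp [FV, hx])

lemma typed_const {Γ : Finset Var} {c : Const} {σ : Ty}
    (h : Typed Γ (.const c) σ) : σ = c.type := by
  cases h; rfl

lemma typed_cons1 {Γ : Finset Var} {τ' : Ty} {d : Tm} {σ : Ty}
    (h : Typed Γ (.app (.const (.cons τ')) d) σ) :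
    σ = .arrow τ' (.arrow (.list τ') (.list τ')) ∧ ∃ Γ', Typed Γ' d .dia := by
  cases h with
  | arrE hd ht hs =>
    have := typed_const ht
    simp only [Const.type, Ty.arrow.injEq] at this
    obtain ⟨h1, h2⟩ := this
    exact ⟨h2, _, h1 ▸ hs⟩
  | prodE1 h => have := typed_const h; simp [Const.type] at this
  | prodE0 h => have := typed_const h; simp [Const.type] at this
  | boolE hd ht hs hr => have := typed_const ht; simp [Const.type] at this
  | tensE hd ht hs => have := typed_const ht; simp [Const.type] at this
  | listE ht hs => have := typed_const ht; simp [Const.type] at this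

lemma typed_cons2 {Γ : Finset Var} {τ' : Ty} {d a : Tm} {σ : Ty}
    (h : Typed Γ (.app (.app (.const (.cons τ')) d) a) σ) :
    σ = .arrow (.list τ') (.list τ') ∧ ∃ Γ', Typed Γ' d .dia := by
  cases h with
  | arrE hd ht hs =>
    obtain ⟨heq, hdd⟩ := typed_cons1 ht
    simp only [Ty.arrow.injEq] at heq
    exact ⟨heq.2, hdd⟩
  | prodE1 h => have := (typed_cons1 h).1; simp at this
  | prodE0 h => have := (typed_cons1 h).1; simp at this
  | boolE hd ht hs hr => have := (typed_cons1 ht).1; simp at this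
  | tensE hd ht hs => have := (typed_cons1 ht).1; simp at this
  | listE ht hs => have := (typed_cons1 ht).1; simp at this

lemma typed_tens1 {Γ : Finset Var} {σ' ρ' : Ty} {a : Tm} {σ : Ty}
    (h : Typed Γ (.app (.const (.tens σ' ρ')) a) σ) :
    σ = .arrow ρ' (.tensor σ' ρ') := by
  cases h with
  | arrE hd ht hs =>
    have := typed_const ht
    simp only [Const.type, Ty.arrow.injEq] at this
    exact this.2
  | prodE1 h => have := typed_const h; simp [Const.type] at this
  | prodE0 h => have := typed_const h; simp [Const.type] at this
  | boolE hd ht hs hr => have := typed_const ht; simp [Const.type] at this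
  | tensE hd ht hs => have := typed_const ht; simp [Const.type] at this
  | listE ht hs => have := typed_const ht; simp [Const.type] at this

/-- Shape characterization of normal almost-closed typable terms, by type. -/
def Char : Ty → Tm → Prop
  | .dia, t => ∃ x : Var, t = .var x ∧ x.ty = .dia
  | .bool, t => t = .const .tt ∨ t = .const .ff
  | .list _, t => ∃ n, IsList t n
  | .prod _ _, t => ∃ a b, t = .pair a b
  | .tensor _ _, t => ∃ σ ρ a b, t = .app (.app (.const (.tens σ ρ)) a) b
  | .arrow _ _, t =>
      (∃ x s, t = .lam x s) ∨
      (∃ τ, t = .const (.cons τ)) ∨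
      (∃ τ d, t = .app (.const (.cons τ)) d) ∨
      (∃ τ d a, t = .app (.app (.const (.cons τ)) d) a) ∨
      (∃ σ ρ, t = .const (.tens σ ρ)) ∨
      (∃ σ ρ a, t = .app (.const (.tens σ ρ)) a) ∨
      (∃ ℓ s n, t = .app ℓ (.brace s) ∧ IsList ℓ n)

lemma main_char {Γ : Finset Var} {t : Tm} {τ : Ty} (h : Typed Γ t τ) :
    Normal t → AlmostClosed t → Char τ t := by
  induction h with
  | @var Γ x hx =>
    intro _ hac
    have hd : x.ty = .dia := hac x (by simp [FV])
    rw [hd]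
    exact ⟨x, rfl, hd⟩
  | const c =>
    intro _ _
    cases c with
    | tt => exact Or.inl rfl
    | ff => exact Or.inr rfl
    | nil τ => exact ⟨0, .nil⟩
    | cons τ => exact Or.inr (Or.inl ⟨τ, rfl⟩)
    | tens τ ρ => exact Or.inr (Or.inr (Or.inr (Or.inr (Or.inl ⟨τ, ρ, rfl⟩))))
  | lamI h ih => intro _ _; exact Or.inl ⟨_, _, rfl⟩
  | @arrE Γ₁ Γ₂ t s τ ρ hdj ht hs iht ihs =>
    intro hn hac
    have ct := iht (normal_appL hn) (ac_appL hac)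
    rcases ct with ⟨x, u, rfl⟩ | ⟨τ₀, rfl⟩ | ⟨τ₀, d, rfl⟩ | ⟨τ₀, d, a, rfl⟩ |
      ⟨σ₀, ρ₀, rfl⟩ | ⟨σ₀, ρ₀, a, rfl⟩ | ⟨ℓ, u, n, rfl, hl⟩
    · exact absurd ⟨_, Red.conv Conv.beta⟩ hn
    · have := typed_const ht
      simp only [Const.type, Ty.arrow.injEq] at this
      obtain ⟨h1, h2⟩ := this
      rw [h2]
      exact Or.inr (Or.inr (Or.inl ⟨τ₀, s, rfl⟩))
    · obtain ⟨heq, hdd⟩ := typed_cons1 ht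
      simp only [Ty.arrow.injEq] at heq
      rw [heq.2]
      exact Or.inr (Or.inr (Or.inr (Or.inl ⟨τ₀, d, s, rfl⟩)))
    · obtain ⟨heq, hdd⟩ := typed_cons2 ht
      simp only [Ty.arrow.injEq] at heq
      rw [heq.2]
      have cs := ihs (normal_appR hn) (ac_appR hac)
      rw [heq.1] at cs
      obtain ⟨m, hm⟩ := cs
      exact ⟨m + 1, .cons hdd hm⟩
    · have := typed_const ht
      simp only [Const.type, Ty.arrow.injEq] at this
      obtain ⟨h1, h2⟩ := this
      rw [h2]
      exact Or.inr (Or.inr (Or.inr (Or.inr (Or.inr (Or.inl ⟨σ₀, ρ₀, s, rfl⟩)))))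
    · have := typed_tens1 ht
      simp only [Ty.arrow.injEq] at this
      rw [this.2]
      exact ⟨σ₀, ρ₀, a, s, rfl⟩
    · cases hl with
      | nil => exact absurd ⟨_, Red.conv Conv.nilIt⟩ hn
      | cons hd hℓ => exact absurd ⟨_, Red.conv (Conv.consIt hℓ)⟩ hn
  | pairI ht hs iht ihs => intro _ _; exact ⟨_, _, rfl⟩
  | prodE1 h ih =>
    intro hn hac
    obtain ⟨a, b, rfl⟩ := ih (normal_appL hn) (ac_appL hac)
    exact absurd ⟨_, Red.conv Conv.projT⟩ hn
  | prodE0 h ih =>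
    intro hn hac
    obtain ⟨a, b, rfl⟩ := ih (normal_appL hn) (ac_appL hac)
    exact absurd ⟨_, Red.conv Conv.projF⟩ hn
  | boolE hdj ht hs hr iht ihs ihr =>
    intro hn hac
    rcases iht (normal_appL hn) (ac_appL hac) with rfl | rfl
    · exact absurd ⟨_, Red.conv Conv.iteT⟩ hn
    · exact absurd ⟨_, Red.conv Conv.iteF⟩ hn
  | tensE hdj ht hs iht ihs =>
    intro hn hac
    obtain ⟨σ₀, ρ₀, a, b, rfl⟩ := iht (normal_appL hn) (ac_appL hac)
    exact absurd ⟨_, Red.conv Conv.tens⟩ hn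
  | listE ht hs iht ihs =>
    intro hn hac
    obtain ⟨n, hl⟩ := iht (normal_appL hn) (ac_appL hac)
    exact Or.inr (Or.inr (Or.inr (Or.inr (Or.inr (Or.inr ⟨_, _, n, rfl, hl⟩)))))

/-- Normal form characterization for almost closed terms of type
    `L(τ)`, `B` and `◇`. -/
theorem normal_form_characterization :
    (∀ (Γ : Finset Var) (t : Tm) (τ : Ty),
      Typed Γ t (.list τ) → Normal t → AlmostClosed t → ∃ n, IsList t n) ∧
    (∀ (Γ : Finset Var) (t : Tm),
      Typed Γ t .bool → Normal t → AlmostClosed t →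
        t = .const .tt ∨ t = .const .ff) ∧
    (∀ (Γ : Finset Var) (t : Tm),
      Typed Γ t .dia → Normal t → AlmostClosed t →
        ∃ x : Var, t = .var x ∧ x.ty = .dia) := by
  refine ⟨?_, ?_, ?_⟩
  · intro Γ t τ h hn hac; exact main_char h hn hac
  · intro Γ t h hn hac; exact main_char h hn hac
  · intro Γ t h hn hac; exact main_char h hn hac

end AS
end

section
/- Substitution length bound: If Γ₁ ⊢ t : τ and Γ₂ ⊢ s : ρ with Γ₁, Γ₂ disjoint, then |t[s/x]| ≤ |t| + |s|, where |·| denotes term length. In particular |(λx.t)s| > |t[s/x]|. -/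
namespace AS

theorem fv_subset {Γ : Finset Var} {t : Tm} {τ : Ty} (h : Typed Γ t τ) :
    FV t ⊆ Γ := by
  induction h with
  | var h => simpa [FV]
  | const => simp [FV]
  | lamI h ih =>
      intro y hy
      simp only [FV, Finset.mem_sdiff, Finset.mem_singleton] at hy
      have := ih hy.1
      simp only [Finset.mem_insert] at this
      exact this.resolve_left hy.2
  | arrE hd ht hs iht ihs =>
      simp only [FV]
      exact Finset.union_subset_union iht ihs
  | pairI ht hs iht ihs =>
      simp only [FV]
      exact Finset.union_subset (by exact iht) (by exact ihs)
  | prodE1 h ih => simpa [FV] using ih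
  | prodE0 h ih => simpa [FV] using ih
  | boolE hd ht hs hr iht ihs ihr =>
      simp only [FV]
      exact Finset.union_subset_union iht (Finset.union_subset ihs ihr)
  | tensE hd ht hs iht ihs =>
      simp only [FV]
      apply Finset.union_subset_union iht
      intro y hy
      simp only [Finset.mem_sdiff, Finset.mem_singleton] at hy
      have := ihs hy.1.1
      simp only [Finset.mem_insert] at this
      rcases this with h1 | h2 | h3
      · exact absurd h1 hy.2
      · exact absurd h2 hy.1.2
      · exact h3
  | listE ht hs iht ihs =>
      simp only [FV]
      exact Finset.union_subset iht (fun y hy => absurd (ihs hy) (Finset.notMem_empty y))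

theorem subst_of_not_mem {t : Tm} {x : Var} {s : Tm} (h : x ∉ FV t) :
    subst t x s = t := by
  induction t with
  | var y =>
      simp only [FV, Finset.mem_singleton] at h
      simp [subst, Ne.symm h]
  | const c => rfl
  | lam y t ih =>
      by_cases hyx : y = x
      · simp [subst, hyx]
      · simp only [FV, Finset.mem_sdiff, Finset.mem_singleton, not_and, not_not] at h
        have : x ∉ FV t := fun hx => hyx (h hx).symm
        simp [subst, hyx, ih this]
  | pair t r iht ihr =>
      simp only [FV, Finset.mem_union, not_or] at h
      simp [subst, iht h.1, ihr h.2]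
  | app t r iht ihr =>
      simp only [FV, Finset.mem_union, not_or] at h
      simp [subst, iht h.1, ihr h.2]
  | brace t ih =>
      simp only [FV] at h
      simp [subst, ih h]

theorem len_subst_le {Γ : Finset Var} {t : Tm} {τ : Ty} (ht : Typed Γ t τ)
    (x : Var) (σ : Tm) : len (subst t x σ) ≤ len t + len σ := by
  induction ht with
  | var h =>
      simp only [subst]
      split <;> simp [len]
  | const c => simp [subst, len]
  | @lamI Γ y t ρ h ih =>
      simp only [subst]
      split
      · simp [len]
      · simp only [len]; omega
  | @arrE Γ₁ Γ₂ t s τ ρ hd ht hs iht ihs =>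
      by_cases hx : x ∈ Γ₁
      · have hxs : x ∉ FV s := fun hm => (Finset.disjoint_left.mp hd hx) (fv_subset hs hm)
        simp only [subst, subst_of_not_mem hxs, len]
        omega
      · have hxt : x ∉ FV t := fun hm => hx (fv_subset ht hm)
        simp only [subst, subst_of_not_mem hxt, len]
        omega
  | pairI ht hs iht ihs =>
      simp only [subst, len]
      omega
  | prodE1 h ih =>
      simp only [subst, len]
      omega
  | prodE0 h ih =>
      simp only [subst, len]
      omega
  | @boolE Γ₁ Γ₂ t s r τ hd ht hs hr iht ihs ihr =>
      by_cases hx : x ∈ Γ₁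
      · have hxs : x ∉ FV s := fun hm => (Finset.disjoint_left.mp hd hx) (fv_subset hs hm)
        have hxr : x ∉ FV r := fun hm => (Finset.disjoint_left.mp hd hx) (fv_subset hr hm)
        simp only [subst, subst_of_not_mem hxs, subst_of_not_mem hxr, len]
        omega
      · have hxt : x ∉ FV t := fun hm => hx (fv_subset ht hm)
        simp only [subst, subst_of_not_mem hxt, len]
        omega
  | @tensE Γ₁ Γ₂ t s y z σ' hd ht hs iht ihs =>
      by_cases hx : x ∈ Γ₁
      · have hfv : x ∉ FV (Tm.lam y (Tm.lam z s)) := by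
          intro hm
          simp only [FV, Finset.mem_sdiff, Finset.mem_singleton] at hm
          have := fv_subset hs hm.1.1
          simp only [Finset.mem_insert] at this
          rcases this with h1 | h2 | h3
          · exact hm.2 h1
          · exact hm.1.2 h2
          · exact Finset.disjoint_left.mp hd hx h3
        show len (Tm.app (subst t x σ) (subst (Tm.lam y (Tm.lam z s)) x σ)) ≤ _
        rw [subst_of_not_mem hfv]
        simp only [len]
        omega
      · have hxt : x ∉ FV t := fun hm => hx (fv_subset ht hm)
        have hlam : len (subst (Tm.lam y (Tm.lam z s)) x σ) ≤ len s + 2 + len σ := by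
          by_cases hy : y = x
          · simp [subst, hy, len]
          · by_cases hz : z = x
            · simp [subst, hy, hz, len]
            · simp only [subst, if_neg hy, if_neg hz, len]
              omega
        simp only [subst, subst_of_not_mem hxt, len] at hlam ⊢
        omega
  | listE ht hs iht ihs =>
      simp only [subst, len]
      omega

/-- Substitution length bound, and in particular β-reduction decreases length. -/
theorem len_subst {Γ₁ Γ₂ : Finset Var} {x : Var} {t s : Tm} {τ ρ : Ty}
    (ht : Typed Γ₁ t τ) (hs : Typed Γ₂ s ρ) (hd : Disjoint Γ₁ Γ₂) :
    len (subst t x s) ≤ len t + len s ∧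
    len (subst t x s) < len (.app (.lam x t) s) := by
  have h := len_subst_le ht x s
  refine ⟨h, ?_⟩
  simp only [len]
  omega

end AS
end

section
/- No closed terms of diamond type: Every typable term of type ◇ contains at least one free variable; that is, if Γ ⊢ t : ◇ then Γ ≠ ∅. In particular there is no closed term of type ◇. -/
namespace AS

/-- Semantic inhabitation predicate on types: `◇` is uninhabited. -/
def Inh : Ty → Prop
  | .dia => False
  | .bool => True
  | .arrow τ ρ => Inh τ → Inh ρ
  | .tensor τ ρ => Inh τ ∧ Inh ρ
  | .prod τ ρ => Inh τ ∧ Inh ρ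
  | .list _ => True

lemma Inh_const (c : Const) : Inh c.type := by
  cases c with
  | tt => trivial
  | ff => trivial
  | nil τ => trivial
  | cons τ => intro h; exact h.elim
  | tens τ ρ => exact fun h1 h2 => ⟨h1, h2⟩

lemma Inh_of_typed {Γ : Finset Var} {t : Tm} {τ : Ty}
    (h : Typed Γ t τ) (hΓ : ∀ x ∈ Γ, Inh x.ty) : Inh τ := by
  induction h with
  | var hx => exact hΓ _ hx
  | const c => exact Inh_const c
  | lamI h ih =>
      intro hx
      exact ih fun y hy => by
        rcases Finset.mem_insert.mp hy with h | h
        · exact h ▸ hx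
        · exact hΓ _ h
  | arrE hd ht hs iht ihs =>
      exact (iht fun x hx => hΓ _ (Finset.mem_union_left _ hx))
        (ihs fun x hx => hΓ _ (Finset.mem_union_right _ hx))
  | pairI ht hs iht ihs => exact ⟨iht hΓ, ihs hΓ⟩
  | prodE1 h ih => exact (ih hΓ).1
  | prodE0 h ih => exact (ih hΓ).2
  | boolE hd ht hs hr iht ihs ihr =>
      exact ihs fun x hx => hΓ _ (Finset.mem_union_right _ hx)
  | tensE hd ht hs iht ihs =>
      have hxy := iht fun x hx => hΓ _ (Finset.mem_union_left _ hx)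
      exact ihs fun z hz => by
        rcases Finset.mem_insert.mp hz with h | h
        · exact h ▸ hxy.1
        · rcases Finset.mem_insert.mp h with h | h
          · exact h ▸ hxy.2
          · exact hΓ _ (Finset.mem_union_right _ h)
  | listE ht hs iht ihs => exact id

/-- Every term of type `◇` contains a free variable; there is no closed term
    of type `◇`. -/
theorem no_closed_dia :
    (∀ (Γ : Finset Var) (t : Tm), Typed Γ t .dia → Γ ≠ ∅) ∧
    (∀ t : Tm, ¬ Typed ∅ t .dia) := by
  have key : ∀ t : Tm, ¬ Typed ∅ t .dia := fun t h =>
    Inh_of_typed h (fun x hx => absurd hx (Finset.notMem_empty x))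
  exact ⟨fun Γ t h hΓ => key t (hΓ ▸ h), key⟩

end AS
end
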